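/- Let (X, 𝒞) be an instance of 3-SAT and let (G, k) be the reduction graph built from (X, 𝒞). Then (X, 𝒞) has a satisfying truth assignment if and only if G has a vertex cover of size at most k. -/

import Mathlib

open SimpleGraph

universe u

/-- A matching: a set of edges of `G` that are pairwise vertex-disjoint. -/
def IsMatching {W : Type u} (G : SimpleGraph W) (M : Set (Sym2 W)) : Prop :=
  M ⊆ G.edgeSet ∧ ∀ e ∈ M, ∀ e' ∈ M, e ≠ e' → ∀ v : W, v ∈ e → v ∉ e'

/-- `v` is matched by `M`. -/
def Matched {W : Type u} (M : Set (Sym2 W)) (v : W) : Prop := ∃ w : W, s(v, w) ∈ M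

open scoped Classical in
/-- `rank G pref M v = pref v (M(v))`, with the convention `|N(v)|+1` if `v` is unmatched. -/
noncomputable def rank {W : Type u} (G : SimpleGraph W) (pref : W → W → ℕ)
    (M : Set (Sym2 W)) (v : W) : ℕ :=
  if h : ∃ w : W, s(v, w) ∈ M then pref v h.choose else (G.neighborSet v).ncard + 1

/-- The number of vertices preferring `M` over `M'`. -/
noncomputable def vote {W : Type u} (G : SimpleGraph W) (pref : W → W → ℕ)
    (M M' : Set (Sym2 W)) : ℕ :=
  {v : W | rank G pref M v < rank G pref M' v}.ncard

/-- A popular matching: no other matching is more popular. -/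
def IsPopular {W : Type u} (G : SimpleGraph W) (pref : W → W → ℕ) (M : Set (Sym2 W)) : Prop :=
  IsMatching G M ∧
    ∀ M' : Set (Sym2 W), IsMatching G M' → vote G pref M' M ≤ vote G pref M M'

/-- Each vertex has a strict preference list: `pref v` is a bijection from the
neighborhood of `v` onto `{1, …, |N(v)|}`. -/
def HasPref {W : Type u} (G : SimpleGraph W) (pref : W → W → ℕ) : Prop :=
  ∀ v : W, Set.BijOn (pref v) (G.neighborSet v) (Set.Icc 1 (G.neighborSet v).ncard)

/-- The edge `e ∉ M` is labeled `+2` by `label_M` (given rank function `rk`):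
both endpoints prefer each other over their status in `M`. -/
def EdgePlus {W : Type u} (pref : W → W → ℕ) (rk : W → ℕ) (e : Sym2 W) : Prop :=
  ∃ x y : W, e = s(x, y) ∧ pref x y < rk x ∧ pref y x < rk y

/-- The edge `e ∉ M` is labeled `-2` by `label_M` (given rank function `rk`):
both endpoints prefer their status in `M` over each other. -/
def EdgeMinus {W : Type u} (pref : W → W → ℕ) (rk : W → ℕ) (e : Sym2 W) : Prop :=
  ∃ x y : W, e = s(x, y) ∧ rk x < pref x y ∧ rk y < pref y x

/-- The graph `G_M`: the spanning subgraph of `G` consisting of the edges of `M`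
together with the edges not labeled `-2`. -/
def GMgraph {W : Type u} (G : SimpleGraph W) (pref : W → W → ℕ) (M : Set (Sym2 W)) :
    SimpleGraph W where
  Adj x y := G.Adj x y ∧ (s(x, y) ∈ M ∨ ¬ EdgeMinus pref (rank G pref M) s(x, y))
  symm := by
    constructor
    intro x y h
    refine ⟨h.1.symm, ?_⟩
    rw [Sym2.eq_swap]
    exact h.2
  loopless := ⟨fun x h => G.irrefl h.1⟩

/-- Consecutive edges alternate between `M` and non-`M`. -/
def altRel {W : Type u} (M : Set (Sym2 W)) (e e' : Sym2 W) : Prop := e ∈ M ↔ e' ∉ M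

/-- An alternating path (with respect to `M`) in a graph `G'`. -/
def IsAltPath {W : Type u} (M : Set (Sym2 W)) {G' : SimpleGraph W} {x y : W}
    (p : G'.Walk x y) : Prop :=
  p.IsPath ∧ List.Chain' (altRel M) p.edges ∧
    (∀ e, p.edges.head? = some e → e ∉ M → ¬ Matched M x) ∧
    (∀ e, p.edges.getLast? = some e → e ∉ M → ¬ Matched M y)

/-- An alternating cycle (with respect to `M`) in a graph `G'`:
the edges alternate cyclically between `M` and non-`M`. -/
def IsAltCycle {W : Type u} (M : Set (Sym2 W)) {G' : SimpleGraph W} {x : W}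
    (p : G'.Walk x x) : Prop :=
  p.IsCycle ∧ List.Chain' (altRel M) (p.edges ++ p.edges.take 1)

/-- `l` contains at least one edge labeled `+2`. -/
def OnePlusEdge {W : Type u} (pref : W → W → ℕ) (rk : W → ℕ) (l : List (Sym2 W)) : Prop :=
  ∃ e ∈ l, EdgePlus pref rk e

/-- `l` contains at least two edges labeled `+2`. -/
def TwoPlusEdges {W : Type u} (pref : W → W → ℕ) (rk : W → ℕ) (l : List (Sym2 W)) : Prop :=
  ∃ e ∈ l, ∃ e' ∈ l, e ≠ e' ∧ EdgePlus pref rk e ∧ EdgePlus pref rk e'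

/-- A vertex cover. -/
def IsVC {V : Type u} (G : SimpleGraph V) (U : Set V) : Prop :=
  ∀ ⦃x y : V⦄, G.Adj x y → x ∈ U ∨ y ∈ U

/-- The vertices of the graph built from a 3-SAT instance: `v x b` is the vertex of the
literal on variable `x` with polarity `b`; `u c x b` is the vertex `u^C_ℓ` for the clause
`c = C` and the literal `ℓ = (x, b) ∈ C`. -/
inductive RVert (X : Type u) : Type u where
  | v : X → Bool → RVert X
  | u : Finset (X × Bool) → X → Bool → RVert X
deriving DecidableEq

/-- Which formal vertices are really vertices of the reduction graph. -/
def RVert.valid {X : Type u} (C : Finset (Finset (X × Bool))) : RVert X → Prop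
  | .v _ _ => True
  | .u c x b => c ∈ C ∧ (x, b) ∈ c

/-- The edges of the reduction graph, up to symmetry. -/
def satAdj {X : Type u} : RVert X → RVert X → Prop
  | .v x b, .v x' b' => x = x' ∧ b ≠ b'
  | .u c x b, .u c' x' b' => c = c' ∧ (x, b) ≠ (x', b')
  | .u _ x b, .v x' b' => x = x' ∧ b = b'
  | .v x b, .u _ x' b' => x = x' ∧ b = b'

/-- The vertex set of the reduction graph built from a 3-SAT instance. -/
def SATVert (X : Type u) (C : Finset (Finset (X × Bool))) : Type u :=
  {r : RVert X // RVert.valid C r}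

/-- The reduction graph `G` built from a 3-SAT instance. -/
def SATgraph (X : Type u) (C : Finset (Finset (X × Bool))) : SimpleGraph (SATVert X C) where
  Adj a b := a ≠ b ∧ (satAdj a.1 b.1 ∨ satAdj b.1 a.1)
  symm := ⟨fun _ _ h => ⟨h.1.symm, h.2.symm⟩⟩
  loopless := ⟨fun _ h => h.1 rfl⟩

/-- The truth assignment `α` satisfies every clause of `C`. -/
def Satisfies {X : Type u} (α : X → Bool) (C : Finset (Finset (X × Bool))) : Prop :=
  ∀ c ∈ C, ∃ l ∈ c, α l.1 = l.2


/-!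
The vertices of the reduction graph fall into gadgets: the edge `{v_x, v_x̄}` of each variable and
the triangle of each clause. Every gadget is a clique, so a vertex cover misses at most one vertex
of each, and hence has at least `|X| + 2|𝒞| = k` vertices; one of size at most `k` misses exactly
one vertex of every gadget. Let `α` make true the literals whose vertex is in the cover. In a
clause `C`, the missed vertex `u^C_ℓ` forces `v_ℓ` into the cover, so `α` satisfies `ℓ`.
Conversely, a satisfying assignment gives the cover made of the true literal vertices and, in each
clause triangle, all vertices but that of one satisfied literal.
-/

open Finset

theorem card_filter_eq_of_le_of_card_le_sum {α ι : Type*} [DecidableEq ι] {s : Finset α}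
    {t : Finset ι} {g : α → ι} {n : ι → ℕ} (hn : ∀ i ∈ t, n i ≤ #{a ∈ s | g a = i})
    (hs : #s ≤ ∑ i ∈ t, n i) : ∀ i ∈ t, #{a ∈ s | g a = i} = n i := by
  have hfibres : ∑ i ∈ t, #{a ∈ s | g a = i} ≤ #s :=
    (sum_card_fiberwise_eq_card_filter s t g).trans_le (card_filter_le _ _)
  intro i hi
  exact ((sum_eq_sum_iff_of_le hn).1 ((sum_le_sum hn).antisymm (hfibres.trans hs)) i hi).symm

theorem IsVC.card_sub_one_le_of_isClique {V : Type*} [DecidableEq V] {G : SimpleGraph V}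
    {S K : Finset V} (hS : IsVC G S) (hK : G.IsClique (K : Set V)) :
    #K - 1 ≤ #{v ∈ K | v ∈ S} := by
  have hmissed : #{v ∈ K | v ∉ S} ≤ 1 := by
    refine card_le_one.2 fun a ha b hb => by_contra fun hab => ?_
    rw [mem_filter] at ha hb
    exact (hS (hK ha.1 hb.1 hab)).elim ha.2 hb.2
  have := card_filter_add_card_filter_not (s := K) (· ∈ S)
  omega

namespace SATVert

variable {X : Type u} {C : Finset (Finset (X × Bool))}

instance [DecidableEq X] : DecidableEq (SATVert X C) :=
  inferInstanceAs (DecidableEq {r : RVert X // r.valid C})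

theorem ext_iff {w w' : SATVert X C} : w = w' ↔ w.1 = w'.1 :=
  Subtype.ext_iff

def lit (x : X) (b : Bool) : SATVert X C := ⟨.v x b, trivial⟩

def clause {c : Finset (X × Bool)} (hc : c ∈ C) {l : X × Bool} (hl : l ∈ c) : SATVert X C :=
  ⟨.u c l.1 l.2, hc, hl⟩

def gadget (w : SATVert X C) : X ⊕ Finset (X × Bool) :=
  match w.1 with
  | .v x _ => .inl x
  | .u c _ _ => .inr c

theorem lit_ne_lit_not (x : X) (b : Bool) : (lit x b : SATVert X C) ≠ lit x (!b) := by
  rw [Ne, SATVert.ext_iff]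
  simp [lit]

theorem clause_inj {c : Finset (X × Bool)} (hc : c ∈ C) {l l' : X × Bool} {hl : l ∈ c}
    {hl' : l' ∈ c} : clause hc hl = clause hc hl' ↔ l = l' := by
  rw [SATVert.ext_iff]
  simp [clause, Prod.ext_iff]

end SATVert

open SATVert

section Reduction

variable {X : Type u} {C : Finset (Finset (X × Bool))}

theorem SATgraph_adj_lit_lit_not (x : X) (b : Bool) :
    (SATgraph X C).Adj (lit x b) (lit x (!b)) :=
  ⟨lit_ne_lit_not x b, .inl ⟨rfl, by simp⟩⟩

theorem SATgraph_adj_clause_clause {c : Finset (X × Bool)} (hc : c ∈ C) {l l' : X × Bool}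
    (hl : l ∈ c) (hl' : l' ∈ c) (hll' : l ≠ l') :
    (SATgraph X C).Adj (clause hc hl) (clause hc hl') :=
  ⟨fun h => hll' ((clause_inj hc).1 h), .inl ⟨rfl, hll'⟩⟩

theorem SATgraph_adj_clause_lit {c : Finset (X × Bool)} (hc : c ∈ C) {l : X × Bool}
    (hl : l ∈ c) : (SATgraph X C).Adj (clause hc hl) (lit l.1 l.2) :=
  ⟨by rw [Ne, SATVert.ext_iff]; simp [clause, lit], .inl ⟨rfl, rfl⟩⟩

def clauseGadget {c : Finset (X × Bool)} (hc : c ∈ C) : Finset (SATVert X C) :=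
  c.attach.map ⟨fun l => clause hc l.2, fun _ _ h => Subtype.ext ((clause_inj hc).1 h)⟩

theorem card_clauseGadget {c : Finset (X × Bool)} (hc : c ∈ C) : #(clauseGadget hc) = #c := by
  simp [clauseGadget]

theorem isClique_clauseGadget {c : Finset (X × Bool)} (hc : c ∈ C) :
    (SATgraph X C).IsClique (clauseGadget hc : Set (SATVert X C)) := by
  simp only [clauseGadget, coe_map]
  rintro _ ⟨l, -, rfl⟩ _ ⟨l', -, rfl⟩ hne
  exact SATgraph_adj_clause_clause hc l.2 l'.2 fun h => hne (congrArg _ (Subtype.ext h))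

end Reduction

section Backward

variable {X : Type u} [DecidableEq X] {C : Finset (Finset (X × Bool))} {S : Finset (SATVert X C)}

theorem one_le_card_filter_gadget_inl (hS : IsVC (SATgraph X C) S) (x : X) :
    1 ≤ #{w ∈ S | gadget w = .inl x} := by
  obtain ⟨b, hb⟩ : ∃ b, lit x b ∈ S := (hS (SATgraph_adj_lit_lit_not x true)).elim
    (fun h => ⟨_, h⟩) (fun h => ⟨_, h⟩)
  exact card_pos.2 ⟨_, mem_filter.2 ⟨hb, rfl⟩⟩

theorem lit_not_notMem_of_card_filter_gadget_inl_le_one {x : X}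
    (hx : #{w ∈ S | gadget w = .inl x} ≤ 1) {b : Bool} (hb : lit x b ∈ S) : lit x (!b) ∉ S :=
  fun hnb => lit_ne_lit_not x b (card_le_one.1 hx _ (mem_filter.2 ⟨hb, rfl⟩) _
    (mem_filter.2 ⟨hnb, rfl⟩))

theorem card_clauseGadget_filter_mem_le {c : Finset (X × Bool)} (hc : c ∈ C) :
    #{w ∈ clauseGadget hc | w ∈ S} ≤ #{w ∈ S | gadget w = .inr c} := by
  refine card_le_card fun w hw => ?_
  obtain ⟨hwK, hwS⟩ := mem_filter.1 hw
  obtain ⟨l, -, rfl⟩ := mem_map.1 hwK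
  exact mem_filter.2 ⟨hwS, rfl⟩

theorem card_sub_one_le_card_filter_gadget_inr (hS : IsVC (SATgraph X C) S)
    {c : Finset (X × Bool)} (hc : c ∈ C) : #c - 1 ≤ #{w ∈ S | gadget w = .inr c} := by
  have := hS.card_sub_one_le_of_isClique (isClique_clauseGadget hc)
  rw [card_clauseGadget] at this
  exact this.trans (card_clauseGadget_filter_mem_le hc)

theorem exists_clause_notMem_of_card_filter_gadget_inr_lt {c : Finset (X × Bool)} (hc : c ∈ C)
    (h : #{w ∈ S | gadget w = .inr c} < #c) : ∃ l, ∃ hl : l ∈ c, clause hc hl ∉ S := by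
  rw [← card_clauseGadget hc] at h
  obtain ⟨w, hwK, hwS⟩ := exists_mem_notMem_of_card_lt_card
    ((card_clauseGadget_filter_mem_le hc).trans_lt h)
  obtain ⟨⟨l, hl⟩, -, rfl⟩ := mem_map.1 hwK
  exact ⟨l, hl, fun hlS => hwS (mem_filter.2 ⟨hwK, hlS⟩)⟩

end Backward

theorem exists_satisfies_of_isVC {X : Type u} [Fintype X] [DecidableEq X]
    {C : Finset (Finset (X × Bool))} (hC : ∀ c ∈ C, 3 ≤ #c) {S : Finset (SATVert X C)}
    (hS : IsVC (SATgraph X C) S) (hcard : #S ≤ Fintype.card X + 2 * #C) :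
    ∃ α : X → Bool, Satisfies α C := by
  have hlower : ∀ i ∈ (univ : Finset X).disjSum C,
      Sum.elim (fun _ => 1) (fun _ => 2) i ≤ #{w ∈ S | gadget w = i} := by
    rintro (x | c) hi
    · exact one_le_card_filter_gadget_inl hS x
    · have hc : c ∈ C := by simpa using hi
      have := card_sub_one_le_card_filter_gadget_inr hS hc
      have := hC c hc
      simp only [Sum.elim_inr]
      omega
  have hexact := card_filter_eq_of_le_of_card_le_sum hlower
    (by simpa [sum_disjSum, mul_comm] using hcard)
  refine ⟨fun x => decide (lit x true ∈ S), fun c hc => ?_⟩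
  obtain ⟨l, hl, hlS⟩ := exists_clause_notMem_of_card_filter_gadget_inr_lt (S := S) hc
    (by rw [hexact (.inr c) (by simpa)]; exact hC c hc)
  have hlit : lit l.1 l.2 ∈ S := (hS (SATgraph_adj_clause_lit hc hl)).resolve_left hlS
  have hnot := lit_not_notMem_of_card_filter_gadget_inl_le_one
    (hexact (.inl l.1) (by simp)).le hlit
  refine ⟨l, hl, ?_⟩
  obtain ⟨x, _ | _⟩ := l
  · simpa using hnot
  · simpa using hlit

section Forward

variable {X : Type u} [Fintype X] [DecidableEq X] {C : Finset (Finset (X × Bool))}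
  (α : X → Bool) (pick : C → X × Bool)

def assignmentCover : Finset (RVert X) :=
  univ.image (fun x => .v x (α x)) ∪
    univ.biUnion fun c : C => (c.1.erase (pick c)).image fun l => .u c l.1 l.2

theorem card_assignmentCover_le (hC : ∀ c ∈ C, #c ≤ 3) (hpick : ∀ c, pick c ∈ c.1) :
    #(assignmentCover α pick) ≤ Fintype.card X + 2 * #C :=
  calc #(assignmentCover α pick)
      ≤ Fintype.card X + ∑ c : C, #((c.1.erase (pick c)).image fun l => RVert.u c l.1 l.2) :=
        (card_union_le _ _).trans (add_le_add card_image_le card_biUnion_le)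
    _ ≤ Fintype.card X + ∑ _c : C, 2 := by
        gcongr with c
        exact card_image_le.trans (by have := hC c c.2; rw [card_erase_of_mem (hpick c)]; omega)
    _ = Fintype.card X + 2 * #C := by simp [mul_comm]

variable {α pick}

theorem v_mem_assignmentCover {x : X} {b : Bool} :
    .v x b ∈ assignmentCover α pick ↔ α x = b := by
  simp [assignmentCover]

theorem u_mem_assignmentCover {c : Finset (X × Bool)} (hc : c ∈ C) {x : X} {b : Bool} :
    .u c x b ∈ assignmentCover α pick ↔ (x, b) ∈ c ∧ (x, b) ≠ pick ⟨c, hc⟩ := by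
  simp only [assignmentCover, mem_union, mem_image, mem_univ, true_and, reduceCtorEq,
    exists_false, false_or, mem_biUnion, Subtype.exists, mem_erase, RVert.u.injEq]
  constructor
  · rintro ⟨_, _, ⟨x, b⟩, ⟨hne, hl⟩, rfl, rfl, rfl⟩
    exact ⟨hl, hne⟩
  · rintro ⟨hl, hne⟩
    exact ⟨c, hc, (x, b), ⟨hne, hl⟩, rfl, rfl, rfl⟩

theorem mem_assignmentCover_or_of_satAdj (hsat : ∀ c, α (pick c).1 = (pick c).2)
    {r r' : RVert X} (hr : r.valid C) (hr' : r'.valid C) (h : satAdj r r') :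
    r ∈ assignmentCover α pick ∨ r' ∈ assignmentCover α pick := by
  match r, r', h with
  | .v x b, .v _ b', ⟨rfl, hbb'⟩ =>
    simp only [v_mem_assignmentCover]
    cases b <;> cases b' <;> cases α x <;> simp_all
  | .u c x b, .u _ x' b', ⟨rfl, hne⟩ =>
    simp only [u_mem_assignmentCover hr.1]
    by_contra! h
    exact hne ((h.1 hr.2).trans (h.2 hr'.2).symm)
  | .u c x b, .v _ _, ⟨rfl, rfl⟩ =>
    rw [u_mem_assignmentCover hr.1, v_mem_assignmentCover]
    by_cases hpick : (x, b) = pick ⟨c, hr.1⟩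
    · exact .inr (by simpa [← hpick] using hsat ⟨c, hr.1⟩)
    · exact .inl ⟨hr.2, hpick⟩
  | .v x b, .u c _ _, ⟨rfl, rfl⟩ =>
    rw [u_mem_assignmentCover hr'.1, v_mem_assignmentCover]
    by_cases hpick : (x, b) = pick ⟨c, hr'.1⟩
    · exact .inl (by simpa [← hpick] using hsat ⟨c, hr'.1⟩)
    · exact .inr ⟨hr'.2, hpick⟩

theorem isVC_assignmentCover (hsat : ∀ c, α (pick c).1 = (pick c).2) :
    IsVC (SATgraph X C) (Subtype.val ⁻¹' (assignmentCover α pick : Set (RVert X))) := by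
  rintro ⟨r, hr⟩ ⟨r', hr'⟩ ⟨-, hadj | hadj⟩
  · exact mem_assignmentCover_or_of_satAdj hsat hr hr' hadj
  · exact (mem_assignmentCover_or_of_satAdj hsat hr' hr hadj).symm

end Forward

theorem exists_isVC_of_satisfies {X : Type u} [Fintype X] [DecidableEq X]
    {C : Finset (Finset (X × Bool))} (hC : ∀ c ∈ C, #c ≤ 3) {α : X → Bool}
    (hα : Satisfies α C) :
    ∃ S : Set (SATVert X C), S.Finite ∧ S.ncard ≤ Fintype.card X + 2 * #C ∧
      IsVC (SATgraph X C) S := by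
  choose pick hpick hsat using fun c : C => hα c c.2
  refine ⟨Subtype.val ⁻¹' (assignmentCover α pick : Set (RVert X)),
    (finite_toSet _).preimage Subtype.val_injective.injOn, ?_, isVC_assignmentCover hsat⟩
  calc (Subtype.val ⁻¹' (assignmentCover α pick : Set (RVert X))).ncard
        ≤ (assignmentCover α pick : Set (RVert X)).ncard :=
        Set.ncard_le_ncard_of_injOn Subtype.val (fun _ h => h) Subtype.val_injective.injOn
          (finite_toSet _)
    _ ≤ Fintype.card X + 2 * #C := by
        rw [Set.ncard_coe_finset]
        exact card_assignmentCover_le α pick hC hpick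

theorem sat_iff_vertex_cover_general {X : Type u} [Fintype X]
    (C : Finset (Finset (X × Bool))) (hC : ∀ c ∈ C, c.card = 3) :
    (∃ α : X → Bool, Satisfies α C) ↔
      (∃ S : Set (SATVert X C), S.Finite ∧ S.ncard ≤ Fintype.card X + 2 * C.card ∧
        IsVC (SATgraph X C) S) := by
  classical
  constructor
  · rintro ⟨α, hα⟩
    exact exists_isVC_of_satisfies (fun c hc => (hC c hc).le) hα
  · rintro ⟨S, hfin, hcard, hS⟩
    lift S to Finset (SATVert X C) using hfin
    rw [Set.ncard_coe_finset] at hcard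
    exact exists_satisfies_of_isVC (fun c hc => (hC c hc).ge) hS hcard

/-- **3-SAT reduces to Vertex Cover.**  A 3-SAT instance `(X, C)` is satisfiable if and
only if the reduction graph has a vertex cover of size at most `k = |X| + 2|C|`. -/
theorem sat_iff_vertex_cover {X : Type u} [Fintype X] [DecidableEq X]
    (C : Finset (Finset (X × Bool))) (hC : ∀ c ∈ C, c.card = 3) :
    (∃ α : X → Bool, Satisfies α C) ↔
      (∃ S : Set (SATVert X C), S.Finite ∧ S.ncard ≤ Fintype.card X + 2 * C.card ∧
        IsVC (SATgraph X C) S) :=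
  sat_iff_vertex_cover_general C hC
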